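/- Let x = (s_0, s_1, …) ∈ {0,1}^ℕ be a realization and let μ' = ε_{λ'} and μ'' = ε_{λ''} be two exchangeable theories on {0,1}^ℕ, where λ', λ'' are Borel probability measures on [0,1]. If μ'(1 | s_0,…,s_{n-1}) = μ''(1 | s_0,…,s_{n-1}) for every n ∈ ℕ (in particular all these conditional forecasts are defined), then λ' = λ'' and hence μ' = μ''. -/

import Mathlib

/-!
Let `w n = bern (pref x n)` be the likelihood of the first `n` outcomes of `x`. Under a mixture with
prior `λ` the forecast after `n` outcomes is `∫ q * w n dλ / ∫ w n dλ`, and `w (n + 1)` is either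
`q * w n` or `w n - q * w n`. Hence equal forecasts give `∫ w n dλ' = ∫ w n dλ''` for all `n`, and,
by induction on `k`, `∫ q ^ k * w n dλ' = ∫ q ^ k * w n dλ''`. For `n = 0` these are the moments,
which determine a finite measure on `[0, 1]` by Weierstrass' theorem. Equal priors give equal
cylinder probabilities, and the cylinders form a generating π-system.
-/
open MeasureTheory Filter

/-- The realization space Ω = {0,1}^ℕ. -/
abbrev Omega : Type := ℕ → Bool

/-- The cylinder set N(σ) of realizations extending the partial realization σ. -/
def cyl (σ : List Bool) : Set Omega := {x | ∀ i : Fin σ.length, x i.1 = σ.get i}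

/-- The partial realization (s₀, …, s_{n-1}) consisting of the first n outcomes of x. -/
def pref (x : Omega) (n : ℕ) : List Bool := List.ofFn (fun i : Fin n => x i.1)

/-- The forecast μ(1 | σ) = μ(N(σ·1))/μ(N(σ)). -/
noncomputable def forecastOne (μ : Measure Omega) (σ : List Bool) : ℝ :=
  (μ (cyl (σ ++ [true]))).toReal / (μ (cyl σ)).toReal

/-- ∏_{i<n} q^{s_i} (1-q)^{1-s_i} for the partial realization σ. -/
noncomputable def bern (σ : List Bool) (q : unitInterval) : ℝ :=
  ∏ i : Fin σ.length, (if σ.get i then (q : ℝ) else 1 - (q : ℝ))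

/-- μ is the exchangeable theory ε_λ: the i.i.d. mixture with prior λ on the parameter. -/
def IsMixtureOf (μ : Measure Omega) (l : Measure unitInterval) : Prop :=
  ∀ σ : List Bool, μ (cyl σ) = ENNReal.ofReal (∫ q, bern σ q ∂l)

lemma bern_eq_prod_map (σ : List Bool) (q : unitInterval) :
    bern σ q = (σ.map fun b => if b then (q : ℝ) else 1 - q).prod :=
  Fin.prod_univ_fun_getElem σ fun b => if b then (q : ℝ) else 1 - q

@[simp]
lemma bern_nil (q : unitInterval) : bern [] q = 1 := by
  simp [bern]

lemma bern_append_singleton (σ : List Bool) (b : Bool) (q : unitInterval) :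
    bern (σ ++ [b]) q = bern σ q * if b then (q : ℝ) else 1 - q := by
  simp [bern_eq_prod_map]

lemma bern_append_true_add_bern_append_false (σ : List Bool) (q : unitInterval) :
    bern (σ ++ [true]) q + bern (σ ++ [false]) q = bern σ q := by
  simp only [bern_append_singleton, if_true, Bool.false_eq_true, if_false]
  ring

lemma bern_nonneg (σ : List Bool) (q : unitInterval) : 0 ≤ bern σ q :=
  Finset.prod_nonneg fun i _ => by
    split
    · exact q.2.1
    · exact unitInterval.one_minus_nonneg q

@[fun_prop]
lemma continuous_bern (σ : List Bool) : Continuous (bern σ) :=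
  continuous_finsetProd _ fun _ _ =>
    continuous_if_const _ (fun _ => by fun_prop) fun _ => by fun_prop

@[simp]
lemma pref_zero (x : Omega) : pref x 0 = [] := by
  simp [pref]

lemma pref_succ (x : Omega) (n : ℕ) : pref x (n + 1) = pref x n ++ [x n] := by
  rw [pref, pref, List.ofFn_succ_last]
  rfl

lemma mem_cyl_pref (x : Omega) (n : ℕ) : x ∈ cyl (pref x n) := fun i => by
  rw [List.get_eq_getElem]
  simp [pref]

@[simp]
lemma cyl_nil : cyl [] = Set.univ := by
  ext; simp [cyl]

lemma measurableSet_cyl (σ : List Bool) : MeasurableSet (cyl σ) := by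
  simp only [cyl, Set.ofPred_forall]
  exact .iInter fun i => measurable_pi_apply _ (measurableSet_singleton _)

lemma isPiSystem_range_cyl : IsPiSystem (Set.range cyl) := by
  rintro _ ⟨σ, rfl⟩ _ ⟨τ, rfl⟩ ⟨y, hyσ, hyτ⟩
  wlog h : σ.length ≤ τ.length generalizing σ τ
  · rw [Set.inter_comm]
    exact this τ σ hyτ hyσ (le_of_not_ge h)
  refine ⟨τ, (Set.inter_eq_right.2 fun z hz i => ?_).symm⟩
  have hi : i.1 < τ.length := i.2.trans_le h
  exact (hz ⟨i, hi⟩).trans ((hyτ ⟨i, hi⟩).symm.trans (hyσ i))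

lemma setOf_apply_eq_eq_biUnion_cyl (i : ℕ) (b : Bool) :
    {y : Omega | y i = b} = ⋃ σ ∈ {σ : List Bool | σ[i]? = some b}, cyl σ := by
  ext y
  simp only [Set.mem_iUnion, Set.mem_ofPred_eq, exists_prop]
  constructor
  · rintro rfl
    exact ⟨pref y (i + 1), by simp only [pref, List.getElem?_ofFn]; simp, mem_cyl_pref y _⟩
  · rintro ⟨σ, hσ, hy⟩
    obtain ⟨hi, rfl⟩ := List.getElem?_eq_some_iff.1 hσ
    exact hy ⟨i, hi⟩

lemma generateFrom_range_cyl :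
    MeasurableSpace.generateFrom (Set.range cyl) = MeasurableSpace.pi := by
  refine le_antisymm (MeasurableSpace.generateFrom_le ?_) (iSup_le fun i => ?_)
  · rintro _ ⟨σ, rfl⟩
    exact measurableSet_cyl σ
  · refine Measurable.comap_le
      (@measurable_to_countable' _ _ _ _ (.generateFrom (Set.range cyl)) _ fun b => ?_)
    change MeasurableSet[.generateFrom (Set.range cyl)] {y : Omega | y i = b}
    rw [setOf_apply_eq_eq_biUnion_cyl]
    exact .biUnion (Set.to_countable _) fun σ _ =>
      MeasurableSpace.measurableSet_generateFrom ⟨σ, rfl⟩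

lemma MeasureTheory.Measure.ext_of_cyl {μ ν : Measure Omega} [IsFiniteMeasure μ]
    (h : ∀ σ, μ (cyl σ) = ν (cyl σ)) : μ = ν :=
  ext_of_generate_finite _ generateFrom_range_cyl.symm isPiSystem_range_cyl
    (by rintro _ ⟨σ, rfl⟩; exact h σ) (by rw [← cyl_nil]; exact h [])

lemma ContinuousMap.continuous_integral {X : Type*} [TopologicalSpace X] [CompactSpace X]
    [MeasurableSpace X] [BorelSpace X] (μ : Measure X) [IsFiniteMeasure μ] :
    Continuous fun f : C(X, ℝ) => ∫ x, f x ∂μ := by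
  refine (MeasureTheory.continuous_integral.comp
    (ContinuousMap.toLp (E := ℝ) 1 μ ℝ).continuous).congr
    fun f => integral_congr_ae (ContinuousMap.coeFn_toLp (p := 1) (𝕜 := ℝ) μ f)

lemma Continuous.integrable_of_compactSpace {X : Type*} [TopologicalSpace X] [CompactSpace X]
    [MeasurableSpace X] [OpensMeasurableSpace X] {μ : Measure X} [IsFiniteMeasure μ]
    {f : X → ℝ} (hf : Continuous f) : Integrable f μ :=
  hf.integrable_of_hasCompactSupport (.of_compactSpace f)

theorem MeasureTheory.Measure.ext_of_integral_pow_eq {s : Set ℝ} [CompactSpace s]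
    {μ ν : Measure s} [IsFiniteMeasure μ] [IsFiniteMeasure ν]
    (h : ∀ k : ℕ, ∫ x, (x : ℝ) ^ k ∂μ = ∫ x, (x : ℝ) ^ k ∂ν) : μ = ν := by
  have hpoly : ∀ p : Polynomial ℝ, ∫ x, p.eval (x : ℝ) ∂μ = ∫ x, p.eval (x : ℝ) ∂ν := by
    intro p
    have hint : ∀ (m : Measure s) [IsFiniteMeasure m] (i : ℕ),
        Integrable (fun x : s => p.coeff i * (x : ℝ) ^ i) m :=
      fun m _ i => Continuous.integrable_of_compactSpace (by fun_prop)
    simp only [Polynomial.eval_eq_sum_range]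
    rw [integral_finsetSum _ fun i _ => hint μ i, integral_finsetSum _ fun i _ => hint ν i]
    simp only [integral_const_mul, h]
  have hcont : ∀ f : C(s, ℝ), ∫ x, f x ∂μ = ∫ x, f x ∂ν := by
    have hclosure : Set.EqOn (fun f : C(s, ℝ) => ∫ x, f x ∂μ) (fun f => ∫ x, f x ∂ν)
        (closure (polynomialFunctions s)) := by
      refine Set.EqOn.closure ?_ (ContinuousMap.continuous_integral μ)
        (ContinuousMap.continuous_integral ν)
      rintro _ ⟨p, -, rfl⟩
      exact hpoly p
    rw [← Subalgebra.topologicalClosure_coe, polynomialFunctions.topologicalClosure] at hclosure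
    exact fun f => hclosure trivial
  exact ext_of_forall_integral_eq_of_IsFiniteMeasure fun f => hcont f.toContinuousMap

namespace IsMixtureOf

variable {μ ν : Measure Omega} {l : Measure unitInterval}

lemma toReal_measure_cyl (h : IsMixtureOf μ l) (σ : List Bool) :
    (μ (cyl σ)).toReal = ∫ q, bern σ q ∂l := by
  rw [h σ, ENNReal.toReal_ofReal (integral_nonneg (bern_nonneg σ))]

lemma forecastOne_eq (h : IsMixtureOf μ l) (σ : List Bool) :
    forecastOne μ σ = (∫ q, bern (σ ++ [true]) q ∂l) / ∫ q, bern σ q ∂l := by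
  rw [forecastOne, h.toReal_measure_cyl, h.toReal_measure_cyl]

lemma isFiniteMeasure (h : IsMixtureOf μ l) : IsFiniteMeasure μ :=
  ⟨by rw [← cyl_nil, h]; exact ENNReal.ofReal_lt_top⟩

lemma unique (hμ : IsMixtureOf μ l) (hν : IsMixtureOf ν l) : μ = ν :=
  haveI := hμ.isFiniteMeasure
  Measure.ext_of_cyl fun σ => by rw [hμ σ, hν σ]

end IsMixtureOf

section Integrals

variable (l : Measure unitInterval) [IsFiniteMeasure l]

lemma integrable_bern (σ : List Bool) : Integrable (bern σ) l :=
  (continuous_bern σ).integrable_of_compactSpace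

lemma integral_bern_append_false (σ : List Bool) :
    ∫ q, bern (σ ++ [false]) q ∂l = ∫ q, bern σ q ∂l - ∫ q, bern (σ ++ [true]) q ∂l := by
  rw [eq_sub_iff_add_eq', ← integral_add (integrable_bern l _) (integrable_bern l _)]
  simp_rw [bern_append_true_add_bern_append_false]

lemma integral_bern_append_true_le (σ : List Bool) :
    ∫ q, bern (σ ++ [true]) q ∂l ≤ ∫ q, bern σ q ∂l := by
  have hfalse : 0 ≤ ∫ q, bern (σ ++ [false]) q ∂l := integral_nonneg (bern_nonneg _)
  rw [integral_bern_append_false] at hfalse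
  linarith

end Integrals

lemma eq_of_div_eq_div_of_le {a b d : ℝ} (ha : 0 ≤ a) (hb : 0 ≤ b) (had : a ≤ d) (hbd : b ≤ d)
    (h : a / d = b / d) : a = b := by
  rcases eq_or_ne d 0 with rfl | hd
  · linarith
  · exact (div_left_inj' hd).1 h

section AlongRealization

variable {x : Omega} {μ' μ'' : Measure Omega} {l' l'' : Measure unitInterval}

lemma integral_bern_pref_eq_of_forecastOne_eq
    [IsProbabilityMeasure l'] [IsProbabilityMeasure l'']
    (h' : IsMixtureOf μ' l') (h'' : IsMixtureOf μ'' l'')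
    (heq : ∀ n, forecastOne μ' (pref x n) = forecastOne μ'' (pref x n)) (n : ℕ) :
    ∫ q, bern (pref x n) q ∂l' = ∫ q, bern (pref x n) q ∂l'' := by
  induction n with
  | zero => simp
  | succ n ih =>
    have htrue :
        ∫ q, bern (pref x n ++ [true]) q ∂l' = ∫ q, bern (pref x n ++ [true]) q ∂l'' := by
      -- both numerators lie in `[0, D]` for the common denominator `D`, which covers `D = 0`
      have hforecast := heq n
      rw [h'.forecastOne_eq, h''.forecastOne_eq, ← ih] at hforecast
      refine eq_of_div_eq_div_of_le (integral_nonneg (bern_nonneg _))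
        (integral_nonneg (bern_nonneg _)) (integral_bern_append_true_le l' _) ?_ hforecast
      exact ih ▸ integral_bern_append_true_le l'' _
    rw [pref_succ]
    cases x n
    · rw [integral_bern_append_false, integral_bern_append_false, ih, htrue]
    · exact htrue

lemma integral_pow_mul_bern_pref_eq [IsFiniteMeasure l'] [IsFiniteMeasure l'']
    (h : ∀ n, ∫ q, bern (pref x n) q ∂l' = ∫ q, bern (pref x n) q ∂l'') (k n : ℕ) :
    ∫ q, (q : ℝ) ^ k * bern (pref x n) q ∂l' = ∫ q, (q : ℝ) ^ k * bern (pref x n) q ∂l'' := by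
  induction k generalizing n with
  | zero => simpa using h n
  | succ k ih =>
    have hsucc : ∀ q : unitInterval,
        (q : ℝ) ^ (k + 1) * bern (pref x n) q = (q : ℝ) ^ k * bern (pref x n ++ [true]) q := by
      intro q
      rw [bern_append_singleton, if_pos rfl]
      ring
    simp_rw [hsucc]
    cases hx : x n
    · have hfalse : ∀ q : unitInterval, (q : ℝ) ^ k * bern (pref x n ++ [true]) q =
          (q : ℝ) ^ k * bern (pref x n) q - (q : ℝ) ^ k * bern (pref x (n + 1)) q := by
        intro q
        rw [pref_succ, hx, ← bern_append_true_add_bern_append_false (pref x n) q]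
        ring
      have hint : ∀ (m : Measure unitInterval) [IsFiniteMeasure m] (n : ℕ),
          Integrable (fun q : unitInterval => (q : ℝ) ^ k * bern (pref x n) q) m :=
        fun m _ n => Continuous.integrable_of_compactSpace (by fun_prop)
      simp_rw [hfalse]
      rw [integral_sub (hint l' n) (hint l' (n + 1)), integral_sub (hint l'' n) (hint l'' (n + 1)),
        ih n, ih (n + 1)]
    · simpa [pref_succ, hx] using ih (n + 1)

end AlongRealization

theorem deFinetti_forecasts_determine_prior_general
    (x : Omega)
    (l' l'' : Measure unitInterval) [IsProbabilityMeasure l'] [IsProbabilityMeasure l'']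
    (μ' μ'' : Measure Omega)
    (h' : IsMixtureOf μ' l') (h'' : IsMixtureOf μ'' l'')
    (heq : ∀ n : ℕ, forecastOne μ' (pref x n) = forecastOne μ'' (pref x n)) :
    l' = l'' ∧ μ' = μ'' := by
  have hbern := integral_bern_pref_eq_of_forecastOne_eq h' h'' heq
  have hl : l' = l'' := Measure.ext_of_integral_pow_eq fun k => by
    simpa using integral_pow_mul_bern_pref_eq hbern k 0
  subst hl
  exact ⟨rfl, h'.unique h''⟩

/-- Lemma: if two exchangeable theories μ' = ε_{λ'} and μ'' = ε_{λ''} produce the same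
(well-defined) forecasts along a single realization x, then λ' = λ'' and μ' = μ''. -/
theorem deFinetti_forecasts_determine_prior
    (x : Omega)
    (l' l'' : Measure unitInterval) [IsProbabilityMeasure l'] [IsProbabilityMeasure l'']
    (μ' μ'' : Measure Omega) [IsProbabilityMeasure μ'] [IsProbabilityMeasure μ'']
    (h' : IsMixtureOf μ' l') (h'' : IsMixtureOf μ'' l'')
    (hpos' : ∀ n : ℕ, 0 < μ' (cyl (pref x n)))
    (hpos'' : ∀ n : ℕ, 0 < μ'' (cyl (pref x n)))
    (heq : ∀ n : ℕ, forecastOne μ' (pref x n) = forecastOne μ'' (pref x n)) :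
    l' = l'' ∧ μ' = μ'' :=
  deFinetti_forecasts_determine_prior_general x l' l'' μ' μ'' h' h'' heq
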